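/- For every real u ≠ 0 with u²·W(e) < 1 for all e ∈ EX, the family (⟨(1 − B_ev(u))x, x⟩)_{x∈VX} is absolutely summable and (1/u)·Σ_{x∈VX} ⟨(1 − B_ev(u))x, x⟩ = − Σ_{e∈EX} 2u·W(e)/(1 − u²W(e)), i.e. tr[(1 − B_ev(u))/u] equals the logarithmic derivative Σ_{e∈EX} d/du log(1 − u²W(e)). -/

import Mathlib

/-! The diagonal entry of `1 - B_ev(u)` at `x` is minus a sum over the darts leaving `x` of
`f(d) = u²W(d) / (1 - u²W(d))`, so the trace is `-Σ_d f(d)` over all darts. This converges: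
`W(d) = w(d)·w(d̄) ≤ w(d)·Σ w` is summable, and `f ≤ 2u²W` once `u²W < 1/2`, which holds
off a finite set. Both darts of an edge carry the same value, so
`Σ_d f(d) = 2 Σ_e u²W(e)/(1 - u²W(e))`, and dividing by `u` gives the logarithmic
derivative. -/

open scoped BigOperators
open SimpleGraph

attribute [local instance 10] Classical.propDecidable
noncomputable local instance (priority := 10) {α : Type*} : DecidableEq α := Classical.decEq _

variable {V : Type*}

/-- The standard basis vector of `ℓ²(ι)` at `i`. -/
noncomputable def bv {ι : Type*} (i : ι) : lp (fun _ : ι => ℂ) 2 := lp.single 2 i 1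

/-- For adjacent vertices `x, y`, `dartW G w h = w(x,y)·w(y,x)`, the weight `W(x,y)` of the
underlying edge. -/
noncomputable def dartW (G : SimpleGraph V) (w : G.Dart → ℝ) {x y : V} (h : G.Adj x y) : ℝ :=
  w ⟨(x, y), h⟩ * w ⟨(y, x), h.symm⟩

/-- The weight `W(e)` of an unoriented edge. -/
noncomputable def Wedge (G : SimpleGraph V) (w : G.Dart → ℝ) : Sym2 V → ℝ :=
  Sym2.lift ⟨fun x y => if h : G.Adj x y then w ⟨(x, y), h⟩ * w ⟨(y, x), h.symm⟩ else 0,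
    fun x y => by
      dsimp only
      by_cases h : G.Adj x y
      · rw [dif_pos h, dif_pos h.symm, mul_comm]
      · rw [dif_neg h, dif_neg (fun h' => h h'.symm)]⟩

namespace SimpleGraph

variable (G : SimpleGraph V)

def dartEquivSigma : G.Dart ≃ Σ x : V, G.neighborSet x where
  toFun d := ⟨d.fst, d.snd, d.adj⟩
  invFun p := ⟨(p.1, p.2.1), p.2.2⟩
  left_inv _ := rfl
  right_inv _ := rfl

def dartToEdgeSet (d : G.Dart) : G.edgeSet := ⟨d.edge, d.edge_mem⟩

theorem dartToEdgeSet_surjective : Function.Surjective G.dartToEdgeSet := by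
  rintro ⟨e, he⟩
  induction e using Sym2.ind with
  | _ x y => exact ⟨⟨(x, y), he⟩, rfl⟩

theorem dartToEdgeSet_preimage (d : G.Dart) :
    G.dartToEdgeSet ⁻¹' {G.dartToEdgeSet d} = ↑({d, d.symm} : Finset G.Dart) := by
  ext d'
  simp [dartToEdgeSet, dart_edge_eq_iff]

variable {G} {α : Type*} [AddCommGroup α] [UniformSpace α] [IsUniformAddGroup α]
  [CompleteSpace α]

theorem HasSum.tsum_neighborSet {f : G.Dart → α} {a : α} (hf : HasSum f a) :
    HasSum (fun x => ∑' y : G.neighborSet x, f ⟨(x, y), y.2⟩) a := by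
  have hσ : HasSum (f ∘ (dartEquivSigma G).symm) a :=
    (dartEquivSigma G).symm.hasSum_iff.mpr hf
  exact hσ.sigma fun x => (hσ.summable.sigma_factor x).hasSum

theorem HasSum.two_nsmul_edgeSet [T2Space α] {F : Sym2 V → α} {a : α}
    (hF : HasSum (fun d : G.Dart => F d.edge) a) :
    HasSum (fun e : G.edgeSet => 2 • F e) a := by
  convert hF.tsum_fiberwise G.dartToEdgeSet using 1
  funext e
  obtain ⟨d, rfl⟩ := G.dartToEdgeSet_surjective e
  rw [dartToEdgeSet_preimage, Finset.tsum_subtype' {d, d.symm} fun d' : G.Dart => F d'.edge,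
    Finset.sum_pair d.symm_ne.symm, Dart.edge_symm, two_nsmul]
  rfl

end SimpleGraph

theorem Summable.div_one_sub {ι : Type*} {g : ι → ℝ} (hg : Summable g) :
    Summable fun i => g i / (1 - g i) := by
  refine .of_norm_bounded_eventually (hg.abs.mul_left 2) ?_
  filter_upwards [hg.abs.tendsto_cofinite_zero.eventually_lt_const one_half_pos] with i hi
  have hsub : 1 / 2 ≤ |1 - g i| := by
    linarith [abs_sub_abs_le_abs_sub 1 (g i), abs_one (α := ℝ)]
  rw [Real.norm_eq_abs, abs_div, div_le_iff₀ (by linarith)]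
  nlinarith [abs_nonneg (g i)]

theorem one_sub_apply_bv_self {ι : Type*}
    (B : lp (fun _ : ι => ℂ) 2 →L[ℂ] lp (fun _ : ι => ℂ) 2) (i : ι) :
    (1 - B) (bv i) i = 1 - B (bv i) i := by
  simp [bv]

theorem wedge_dart_edge (G : SimpleGraph V) (w : G.Dart → ℝ) (d : G.Dart) :
    Wedge G w d.edge = w d * w d.symm := by
  simp only [Wedge, Dart.edge, Sym2.lift_mk, dif_pos d.adj]
  rfl

theorem statement_14_general (G : SimpleGraph V)
    (w : G.Dart → ℝ) (hw : ∀ e, 0 < w e) (hsum : Summable w)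
    (u : ℝ) (hu0 : u ≠ 0)
    (hu : ∀ ⦃x y : V⦄ (h : G.Adj x y), u ^ 2 * dartW G w h < 1)
    (Bev : lp (fun _ : V => ℂ) 2 →L[ℂ] lp (fun _ : V => ℂ) 2)
    (hBev : ∀ x y : V, Bev (bv x) y
      = if y = x then
          ((1 + ∑' x' : G.neighborSet x,
            u ^ 2 * dartW G w x'.2 / (1 - u ^ 2 * dartW G w x'.2) : ℝ) : ℂ)
        else 0) :
    Summable (fun x : V => ‖(1 - Bev) (bv x) x‖) ∧
    (1 / (u : ℂ)) * ∑' x : V, (1 - Bev) (bv x) x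
      = -((∑' e : G.edgeSet,
          2 * u * Wedge G w e.1 / (1 - u ^ 2 * Wedge G w e.1) : ℝ) : ℂ) := by
  set f : G.Dart → ℝ := fun d => u ^ 2 * (w d * w d.symm) / (1 - u ^ 2 * (w d * w d.symm))
  have hf_nonneg : ∀ d, 0 ≤ f d := fun d =>
    div_nonneg (mul_nonneg (sq_nonneg u) (mul_pos (hw d) (hw d.symm)).le)
      (sub_nonneg.2 (hu d.adj).le)
  have hf : Summable f := by
    have hinj : Function.Injective fun d : G.Dart => (d, d.symm) :=
      fun _ _ h => (Prod.ext_iff.1 h).1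
    have hW : Summable fun d : G.Dart => w d * w d.symm :=
      (hsum.mul_of_nonneg hsum (fun d => (hw d).le) fun d => (hw d).le).comp_injective hinj
    exact (hW.mul_left (u ^ 2)).div_one_sub
  have hdiag : ∀ x,
      (1 - Bev) (bv x) x = -((∑' y : G.neighborSet x, f ⟨(x, y), y.2⟩ : ℝ) : ℂ) := by
    intro x
    rw [one_sub_apply_bv_self, hBev, if_pos rfl, Complex.ofReal_add, Complex.ofReal_one,
      sub_add_cancel_left]
    rfl
  have hvert := hf.hasSum.tsum_neighborSet
  have hedge : HasSum (fun e : G.edgeSet => 2 * u * Wedge G w e / (1 - u ^ 2 * Wedge G w e))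
      ((1 / u) * ∑' d, f d) := by
    set F : Sym2 V → ℝ := fun e => u ^ 2 * Wedge G w e / (1 - u ^ 2 * Wedge G w e) with hF_def
    have hF : HasSum (fun d : G.Dart => F d.edge) (∑' d, f d) := by
      simpa only [hF_def, wedge_dart_edge] using hf.hasSum
    refine (hF.two_nsmul_edgeSet.mul_left (1 / u)).congr_fun fun e => ?_
    rw [hF_def, nsmul_eq_mul]
    field_simp
    ring
  refine ⟨?_, ?_⟩
  · simp_rw [hdiag, norm_neg, Complex.norm_real,
      Real.norm_of_nonneg (tsum_nonneg fun _ => hf_nonneg _)]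
    exact hvert.summable
  · rw [tsum_congr hdiag, tsum_neg, ← Complex.ofReal_tsum, hvert.tsum_eq, hedge.tsum_eq]
    push_cast
    ring

/-- For real `u ≠ 0` with `u²W < 1` everywhere, the diagonal of
`1 − B_ev(u)` is absolutely summable and
`(1/u)·tr(1 − B_ev(u)) = −Σ_{e∈EX} 2uW(e)/(1 − u²W(e))`. -/
theorem statement_14 (G : SimpleGraph V) (hconn : G.Connected)
    (M : ℝ) (hM : 0 < M)
    (hval : ∀ x : V, (G.neighborSet x).Finite ∧ ((G.neighborSet x).ncard : ℝ) ≤ M)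
    (w : G.Dart → ℝ) (hw : ∀ e, 0 < w e) (hsum : Summable w)
    (u : ℝ) (hu0 : u ≠ 0)
    (hu : ∀ ⦃x y : V⦄ (h : G.Adj x y), u ^ 2 * dartW G w h < 1)
    (Bev : lp (fun _ : V => ℂ) 2 →L[ℂ] lp (fun _ : V => ℂ) 2)
    (hBev : ∀ x y : V, Bev (bv x) y
      = if y = x then
          ((1 + ∑' x' : G.neighborSet x,
            u ^ 2 * dartW G w x'.2 / (1 - u ^ 2 * dartW G w x'.2) : ℝ) : ℂ)
        else 0) :
    Summable (fun x : V => ‖(1 - Bev) (bv x) x‖) ∧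
    (1 / (u : ℂ)) * ∑' x : V, (1 - Bev) (bv x) x
      = -((∑' e : G.edgeSet,
          2 * u * Wedge G w e.1 / (1 - u ^ 2 * Wedge G w e.1) : ℝ) : ℂ) :=
  statement_14_general G w hw hsum u hu0 hu Bev hBev
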